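/- arXiv:0910.3362 — 2 statements merged into one kernel-verified Lean document; each statement's English description precedes it below -/
import Mathlib

section
/- Every thick subset of ℤ₊ containing 0 contains an md-set; that is, for every thick set C ⊆ ℤ₊ with 0 ∈ C there exist an M-system (Y,S), a transitive point y ∈ Y and a neighborhood U of y such that N(y,U) ⊆ C. -/
open Set Filter Topology Function

namespace PaperFormal

/-- The return-time set `N(x,U) = {n ∈ ℤ₊ : Tⁿ x ∈ U}`. -/
def retTimes {X : Type} (T : X → X) (x : X) (U : Set X) : Set ℕ :=
  {n : ℕ | T^[n] x ∈ U}

/-- A point is recurrent if `N(x,U)` is infinite for every neighborhood `U` of `x`. -/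
def RecurrentPt {X : Type} [TopologicalSpace X] (T : X → X) (x : X) : Prop :=
  ∀ U ∈ nhds x, (retTimes T x U).Infinite

/-- The (forward) orbit closure of a point. -/
def orbitClosure {X : Type} [TopologicalSpace X] (T : X → X) (x : X) : Set X :=
  closure (Set.range fun n : ℕ => T^[n] x)

/-- A pair `(x,y)` is proximal if `lim T^{nᵢ} x = lim T^{nᵢ} y` along some sequence `nᵢ`. -/
def ProximalPair {X : Type} [TopologicalSpace X] (T : X → X) (x y : X) : Prop :=
  ∃ (u : ℕ → ℕ) (z : X),
    Tendsto (fun i => T^[u i] x) atTop (nhds z) ∧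
    Tendsto (fun i => T^[u i] y) atTop (nhds z)

/-- A point `x` is distal if every `y` in its orbit closure proximal to `x` equals `x`. -/
def DistalPt {X : Type} [TopologicalSpace X] (T : X → X) (x : X) : Prop :=
  ∀ y ∈ orbitClosure T x, ProximalPair T x y → y = x

/-- `A` is a minimal set: nonempty, closed, invariant, with no proper such subset. -/
def IsMinimalSet {X : Type} [TopologicalSpace X] (T : X → X) (A : Set X) : Prop :=
  A.Nonempty ∧ IsClosed A ∧ Set.MapsTo T A A ∧
    ∀ B ⊆ A, B.Nonempty → IsClosed B → Set.MapsTo T B B → B = A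

/-- A point is minimal (almost periodic) if its orbit closure is a minimal set. -/
def IsMinimalPt {X : Type} [TopologicalSpace X] (T : X → X) (x : X) : Prop :=
  IsMinimalSet T (orbitClosure T x)

/-- A minimal system: no proper nonempty closed invariant subset. -/
def MinimalSys {X : Type} [TopologicalSpace X] (T : X → X) : Prop :=
  ∀ B : Set X, B.Nonempty → IsClosed B → Set.MapsTo T B B → B = Set.univ

/-- A transitive system: `N(U,V)` is infinite for all opene `U`, `V`. -/
def TransitiveSys {X : Type} [TopologicalSpace X] (T : X → X) : Prop :=
  ∀ U V : Set X, IsOpen U → IsOpen V → U.Nonempty → V.Nonempty →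
    {n : ℕ | (U ∩ T^[n] ⁻¹' V).Nonempty}.Infinite

/-- Transitivity of the subsystem on an invariant subset `A` (relative open sets). -/
def TransitiveOn {X : Type} [TopologicalSpace X] (T : X → X) (A : Set X) : Prop :=
  ∀ U V : Set X, IsOpen U → IsOpen V → (U ∩ A).Nonempty → (V ∩ A).Nonempty →
    {n : ℕ | (U ∩ A ∩ T^[n] ⁻¹' V).Nonempty}.Infinite

/-- A transitive point: a point with dense forward orbit. -/
def TransPt {X : Type} [TopologicalSpace X] (T : X → X) (x : X) : Prop :=
  Dense (Set.range fun n : ℕ => T^[n] x)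

/-- Finite sums of the sequence `p` over nonempty finite index sets contained in `[n,∞)`. -/
def FSfrom (p : ℕ → ℕ) (n : ℕ) : Set ℕ :=
  {m | ∃ α : Finset ℕ, α.Nonempty ∧ (∀ i ∈ α, n ≤ i) ∧ m = ∑ i ∈ α, p i}

/-- Finite sums of the sequence `p` over nonempty finite index sets. -/
def FS (p : ℕ → ℕ) : Set ℕ := FSfrom p 0

/-- An IP set: a set containing all finite sums of some sequence of natural numbers. -/
def IPSet (A : Set ℕ) : Prop :=
  ∃ p : ℕ → ℕ, (∀ i, 0 < p i) ∧ FS p ⊆ A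

/-- An IP* set: a set meeting every IP set. -/
def IPStar (A : Set ℕ) : Prop :=
  ∀ B : Set ℕ, IPSet B → (A ∩ B).Nonempty

/-- A syndetic set: a set with bounded gaps. -/
def Syndetic (S : Set ℕ) : Prop :=
  ∃ N : ℕ, ∀ m : ℕ, ∃ k ∈ S, m ≤ k ∧ k ≤ m + N

/-- A thick set: a set containing arbitrarily long runs of consecutive integers. -/
def Thick (S : Set ℕ) : Prop :=
  ∀ n : ℕ, ∃ m : ℕ, ∀ i ≤ n, m + i ∈ S

/-- A piecewise syndetic set: an intersection of a syndetic set with a thick set. -/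
def PiecewiseSyndetic (A : Set ℕ) : Prop :=
  ∃ S₁ S₂ : Set ℕ, Syndetic S₁ ∧ Thick S₂ ∧ A = S₁ ∩ S₂

/-- A thickly syndetic set: a set meeting every piecewise syndetic set. -/
def ThicklySyndetic (A : Set ℕ) : Prop :=
  ∀ B : Set ℕ, PiecewiseSyndetic B → (A ∩ B).Nonempty

/-- `x` is `F`-recurrent for the family `F` if `N(x,U) ∈ F` for every neighborhood `U`. -/
def FRecurrentPt {X : Type} [TopologicalSpace X] (F : Set (Set ℕ)) (T : X → X) (x : X) :
    Prop :=
  ∀ U ∈ nhds x, retTimes T x U ∈ F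

/-- `x` is `F`-product recurrent: `(x,y)` is recurrent for every `F`-recurrent point `y`
in any topological dynamical system `(Y,S)`. -/
def FProductRecurrent {X : Type} [TopologicalSpace X] (F : Set (Set ℕ)) (T : X → X)
    (x : X) : Prop :=
  ∀ (Y : Type) [MetricSpace Y] [CompactSpace Y] (S : Y → Y),
    Continuous S → Function.Surjective S →
      ∀ y : Y, FRecurrentPt F S y → RecurrentPt (Prod.map T S) (x, y)

/-- A joining of `(X,T)` and `(Y,S)`: a nonempty closed invariant subset of `X × Y`
projecting onto both coordinates. -/
def Joining {X Y : Type} [TopologicalSpace X] [TopologicalSpace Y]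
    (T : X → X) (S : Y → Y) (J : Set (X × Y)) : Prop :=
  J.Nonempty ∧ IsClosed J ∧ Set.MapsTo (Prod.map T S) J J ∧
    Prod.fst '' J = Set.univ ∧ Prod.snd '' J = Set.univ

/-- Two systems are disjoint if their only joining is the full product. -/
def DisjointSys {X Y : Type} [TopologicalSpace X] [TopologicalSpace Y]
    (T : X → X) (S : Y → Y) : Prop :=
  ∀ J : Set (X × Y), Joining T S J → J = Set.univ

/-- Property (★) of a point: for each neighborhood `V` of `x` there is `n` such that for
every finite set `S` whose distinct elements are at distance `≥ n`, some common shift `ℓ`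
puts all of `T^{s+ℓ} x`, `s ∈ S`, inside `V`. -/
def StarProp {X : Type} [TopologicalSpace X] (T : X → X) (x : X) : Prop :=
  ∀ V ∈ nhds x, ∃ n : ℕ, ∀ S : Finset ℕ,
    (∀ s ∈ S, ∀ t ∈ S, s < t → n ≤ t - s) →
      ∃ ℓ : ℕ, ∀ s ∈ S, T^[s + ℓ] x ∈ V

/-- `F` is an independence set for the pair `(U₀, U₁)`. -/
def IndepSet {X : Type} (T : X → X) (U₀ U₁ : Set X) (F : Set ℕ) : Prop :=
  ∀ J : Finset ℕ, ↑J ⊆ F → J.Nonempty → ∀ s : ℕ → Bool,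
    (⋂ j ∈ J, T^[j] ⁻¹' (if s j then U₁ else U₀)).Nonempty

/-! The full shift on `ℕ → Bool` is transitive, and its periodic points, which are minimal,
are dense. Since `C` is thick, all finite words can be written on pairwise disjoint runs of
consecutive elements of `C`; filling the rest with `false` and putting `true` at `0` gives a
point `y` with dense orbit whose `true` positions all lie in `C`, so that
`N(y, {u | u 0 = true}) ⊆ C`. -/

section PeriodicPoints

variable {X : Type} {T : X → X} {n : ℕ} {x : X}

lemma finite_range_iterate_of_isPeriodicPt (hx : IsPeriodicPt T n x) (hn : 0 < n) :
    (range fun k : ℕ => T^[k] x).Finite :=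
  ((finite_Iio n).image fun k => T^[k] x).subset <| by
    rintro _ ⟨k, rfl⟩
    exact ⟨k % n, Nat.mod_lt k hn, hx.iterate_mod_apply k⟩

lemma isMinimalPt_of_isPeriodicPt [TopologicalSpace X] [T1Space X] (hx : IsPeriodicPt T n x)
    (hn : 0 < n) : IsMinimalPt T x := by
  have hclosed : IsClosed (range fun k : ℕ => T^[k] x) :=
    (finite_range_iterate_of_isPeriodicPt hx hn).isClosed
  rw [IsMinimalPt, orbitClosure, hclosed.closure_eq]
  refine ⟨⟨x, 0, rfl⟩, hclosed, ?_, fun B hB ⟨_, hb⟩ _ hBT => ?_⟩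
  · rintro _ ⟨k, rfl⟩
    exact ⟨k + 1, iterate_succ_apply' T k x⟩
  · obtain ⟨r, rfl⟩ := hB hb
    -- Running on for `n * r - r` more steps returns to `x`.
    have hxB : x ∈ B := by
      have := hBT.iterate (n * r - r) hb
      rwa [← iterate_add_apply, Nat.sub_add_cancel (Nat.le_mul_of_pos_left r hn),
        (hx.mul_const r).eq] at this
    refine hB.antisymm ?_
    rintro _ ⟨k, rfl⟩
    exact hBT.iterate k hxB

end PeriodicPoints

section Shift

open PiNat

variable {α : Type}

def shift (z : ℕ → α) : ℕ → α := fun n => z (n + 1)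

@[simp]
lemma shift_iterate_apply (n : ℕ) (z : ℕ → α) (k : ℕ) : shift^[n] z k = z (k + n) := by
  induction n generalizing z with
  | zero => rfl
  | succ n ih => rw [iterate_succ_apply, ih]; rfl

lemma shift_surjective [Nonempty α] : Surjective (shift : (ℕ → α) → ℕ → α) :=
  fun z => ⟨fun n => Nat.casesOn n (Classical.arbitrary α) z, rfl⟩

variable [TopologicalSpace α]

lemma continuous_shift : Continuous (shift : (ℕ → α) → ℕ → α) :=
  continuous_pi fun n => continuous_apply (n + 1)

variable [DiscreteTopology α]

lemma exists_cylinder_subset_of_mem_nhds {z : ℕ → α} {U : Set (ℕ → α)} (hU : U ∈ 𝓝 z) :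
    ∃ N, cylinder z N ⊆ U := by
  obtain ⟨_, ⟨y, N, rfl⟩, hz, hsub⟩ := (isTopologicalBasis_cylinders _).mem_nhds_iff.1 hU
  exact ⟨N, mem_cylinder_iff_eq.1 hz ▸ hsub⟩

lemma transitiveSys_shift : TransitiveSys (shift : (ℕ → α) → ℕ → α) := by
  rintro U V hU hV ⟨u, hu⟩ ⟨v, hv⟩
  obtain ⟨N, hNU⟩ := exists_cylinder_subset_of_mem_nhds (hU.mem_nhds hu)
  obtain ⟨M, hMV⟩ := exists_cylinder_subset_of_mem_nhds (hV.mem_nhds hv)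
  refine (Ici_infinite N).mono fun n (hn : N ≤ n) => ?_
  refine ⟨fun k => if k < n then u k else v (k - n), hNU fun i hi => ?_, hMV fun i _ => ?_⟩
  · simp [hi.trans_le hn]
  · simp

lemma dense_isPeriodicPt_shift :
    Dense {z : ℕ → α | ∃ n, 0 < n ∧ IsPeriodicPt shift n z} := by
  refine (isTopologicalBasis_cylinders _).dense_iff.2 ?_
  rintro _ ⟨z, N, rfl⟩ -
  refine ⟨fun k => z (k % (N + 1)), fun i hi => ?_, N + 1, N.succ_pos, ?_⟩
  · exact congrArg z (Nat.mod_eq_of_lt (by omega))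
  · funext k
    simp

lemma transPt_shift_of_forall_cylinder {y : ℕ → α}
    (h : ∀ z N, ∃ n, shift^[n] y ∈ cylinder z N) : TransPt shift y := by
  refine (isTopologicalBasis_cylinders _).dense_iff.2 ?_
  rintro _ ⟨z, N, rfl⟩ -
  obtain ⟨n, hn⟩ := h z N
  exact ⟨_, hn, n, rfl⟩

end Shift

section Blocks

variable {C : Set ℕ}

lemma Thick.exists_run_ge (hC : Thick C) (P L : ℕ) : ∃ m, P ≤ m ∧ ∀ i < L, m + i ∈ C := by
  obtain ⟨m, hm⟩ := hC (P + L)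
  exact ⟨m + P, by omega, fun i hi => by simpa [add_assoc] using hm (P + i) (by omega)⟩

lemma Thick.exists_blocks (hC : Thick C) (L : ℕ → ℕ) :
    ∃ b : ℕ → ℕ, (∀ k, 0 < b k) ∧ (∀ k, b k + L k ≤ b (k + 1)) ∧
      ∀ k, ∀ i < L k, b k + i ∈ C := by
  choose s hs_ge hs_mem using hC.exists_run_ge
  let b : ℕ → ℕ := fun k => Nat.rec (s 1 (L 0)) (fun k bk => s (bk + L k + 1) (L (k + 1))) k
  refine ⟨b, fun k => ?_, fun k => ?_, fun k => ?_⟩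
  · cases k with
    | zero => exact hs_ge 1 (L 0)
    | succ k => exact (Nat.succ_pos _).trans_le (hs_ge _ _)
  · exact (Nat.le_succ _).trans (hs_ge _ _)
  · cases k with
    | zero => exact hs_mem _ _
    | succ k => exact hs_mem _ _

lemma eq_of_add_eq_add_of_blocks {b L : ℕ → ℕ} (hb : ∀ k, b k + L k ≤ b (k + 1))
    {k k' i i' : ℕ} (hi : i < L k) (hi' : i' < L k') (h : b k + i = b k' + i') :
    k = k' ∧ i = i' := by
  have hmono : Monotone b := monotone_nat_of_le_succ fun k => (Nat.le_add_right _ _).trans (hb k)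
  have hsep : ∀ {k k'}, k < k' → b k + L k ≤ b k' := fun h => (hb _).trans (hmono h)
  rcases lt_trichotomy k k' with hk | rfl | hk
  · have := hsep hk; omega
  · omega
  · have := hsep hk; omega

end Blocks

open PiNat in
lemma exists_transPt_shift_support_subset {C : Set ℕ} (hC : Thick C) (h0 : 0 ∈ C) :
    ∃ y : ℕ → Bool, TransPt shift y ∧ y 0 = true ∧ ∀ j, y j = true → j ∈ C := by
  classical
  obtain ⟨ws, hws⟩ := exists_surjective_nat (List Bool)
  obtain ⟨b, hb_pos, hb, hbC⟩ := hC.exists_blocks fun k => (ws k).length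
  -- Word `ws k` is written on the run `[b k, b k + |ws k|)` of `C`.
  let D : Set ℕ :=
    insert 0 {j | ∃ k, ∃ i < (ws k).length, j = b k + i ∧ (ws k).getD i false = true}
  have hD : ∀ k, ∀ i < (ws k).length, b k + i ∈ D ↔ (ws k).getD i false = true := by
    refine fun k i hi => ⟨?_, fun h => Or.inr ⟨k, i, hi, rfl, h⟩⟩
    rintro (h | ⟨k', i', hi', h, hw⟩)
    · have := hb_pos k
      omega
    · obtain ⟨rfl, rfl⟩ := eq_of_add_eq_add_of_blocks hb hi hi' h
      exact hw
  refine ⟨fun j => decide (j ∈ D), transPt_shift_of_forall_cylinder fun z N => ?_,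
    by simp [D], fun j hj => ?_⟩
  · obtain ⟨k, hk⟩ := hws (List.ofFn fun i : Fin N => z i)
    refine ⟨b k, fun i hi => ?_⟩
    have hik : i < (ws k).length := by simpa [hk]
    simp [add_comm i, hD k i hik, hk, hi]
  · rcases of_decide_eq_true hj with rfl | ⟨k, i, hi, rfl, -⟩
    · exact h0
    · exact hbC k i hi

/-- every thick subset of `ℤ₊` containing `0` contains an md-set. -/
theorem statement_5 (C : Set ℕ) (hC : Thick C) (h0 : (0 : ℕ) ∈ C) :
    ∃ (Y : Type) (_ : MetricSpace Y) (_ : CompactSpace Y) (S : Y → Y),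
      Continuous S ∧ Function.Surjective S ∧ TransitiveSys S ∧
        Dense {y : Y | IsMinimalPt S y} ∧
        ∃ y : Y, TransPt S y ∧ ∃ U ∈ nhds y, retTimes S y U ⊆ C := by
  obtain ⟨y, hy, hy0, hyC⟩ := exists_transPt_shift_support_subset hC h0
  refine ⟨ℕ → Bool, PiNat.metricSpaceOfDiscreteUniformity fun _ => rfl, inferInstance, shift,
    continuous_shift, shift_surjective, transitiveSys_shift, ?_, y, hy, {u | u 0 = true}, ?_,
    fun n hn => hyC n ?_⟩
  · refine Dense.mono ?_ dense_isPeriodicPt_shift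
    rintro z ⟨n, hn, hz⟩
    exact isMinimalPt_of_isPeriodicPt hz hn
  · have hU : IsOpen {u : ℕ → Bool | u 0 = true} :=
      (isOpen_discrete {true}).preimage (continuous_apply (A := fun _ => Bool) 0)
    exact hU.mem_nhds hy0
  · simpa [retTimes] using hn

end PaperFormal
end

section
/- Let (X,T) be a transitive topological dynamical system which is disjoint from every minimal topological dynamical system. Then every transitive point of (X,T) is F_s-product recurrent (i.e. weakly product recurrent); moreover, if X has more than one point, then every transitive point of (X,T) is non-minimal. -/
/-!
If `y` has syndetic return times, its orbit closure `Z` is a minimal system. Disjointness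
from `Z` forces the orbit closure of `(x, y)` in `X × Z`, which is a joining because both
coordinates have dense orbits, to be all of `X × Z`. So `(x, y)` has a dense orbit under a
surjective map, hence is recurrent. If `x` were minimal, `X` itself would be minimal, and
disjointness from itself makes the diagonal, a joining, equal to `X × X`.
-/

open Set Filter Topology Function

namespace PaperFormal

section Orbits

variable {X Y : Type} [TopologicalSpace X] [TopologicalSpace Y]

lemma mem_orbitClosure_self (T : X → X) (x : X) : x ∈ orbitClosure T x :=
  subset_closure ⟨0, rfl⟩

lemma mapsTo_orbitClosure {T : X → X} (hT : Continuous T) (x : X) :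
    MapsTo T (orbitClosure T x) (orbitClosure T x) :=
  MapsTo.closure (fun _ ⟨n, hn⟩ => ⟨n + 1, hn ▸ iterate_succ_apply' T n x⟩) hT

lemma orbitClosure_subset {T : X → X} {x : X} {A : Set X} (hxA : x ∈ A) (hA : IsClosed A)
    (hTA : MapsTo T A A) : orbitClosure T x ⊆ A :=
  closure_minimal (range_subset_iff.2 fun n => hTA.iterate n hxA) hA

lemma image_orbitClosure [CompactSpace X] [T2Space Y] {T : X → X} {S : Y → Y} {π : X → Y}
    (hπ : Continuous π) (hπTS : Semiconj π T S) (x : X) :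
    π '' orbitClosure T x = orbitClosure S (π x) := by
  rw [orbitClosure, orbitClosure, ← hπ.isClosedMap.closure_image_eq_of_continuous hπ,
    ← range_comp]
  congr 2
  ext n
  exact (hπTS.iterate_right n).eq x

lemma RecurrentPt.map {T : X → X} {S : Y → Y} {π : X → Y} (hπ : Continuous π)
    (hπTS : Semiconj π T S) {x : X} (hx : RecurrentPt T x) : RecurrentPt S (π x) := by
  intro U hU
  refine (hx _ (hπ.continuousAt.preimage_mem_nhds hU)).mono fun n hn => ?_
  simpa only [retTimes, mem_ofPred_eq, mem_preimage, (hπTS.iterate_right n).eq] using hn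

lemma transPt_iff_orbitClosure_eq_univ {T : X → X} {x : X} :
    TransPt T x ↔ orbitClosure T x = univ :=
  dense_iff_closure_eq

lemma TransPt.iterate {T : X → X} (hT : Continuous T) (hTs : Surjective T) {x : X}
    (hx : TransPt T x) (j : ℕ) : TransPt T (T^[j] x) := by
  have hdense := (hTs.iterate j).denseRange.dense_image (hT.iterate j) hx
  rw [← range_comp] at hdense
  refine hdense.mono (range_subset_iff.2 fun n => ⟨n, ?_⟩)
  exact (Commute.iterate_iterate_self T n j).eq x

lemma TransPt.recurrentPt {T : X → X} (hT : Continuous T) (hTs : Surjective T) {x : X}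
    (hx : TransPt T x) : RecurrentPt T x := by
  intro U hU
  refine Set.infinite_of_not_bddAbove fun ⟨N, hN⟩ => ?_
  obtain ⟨_, ⟨k, rfl⟩, hk⟩ := (hx.iterate hT hTs (N + 1)).inter_nhds_nonempty hU
  have hret : k + (N + 1) ∈ retTimes T x U := by rwa [retTimes, mem_ofPred, iterate_add_apply]
  have := hN hret
  omega

lemma TransPt.minimalSys {T : X → X} {x : X} (hx : TransPt T x) (hmin : IsMinimalPt T x) :
    MinimalSys T := by
  rw [IsMinimalPt, transPt_iff_orbitClosure_eq_univ.mp hx] at hmin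
  exact fun B hB hBc hTB => hmin.2.2.2 B (subset_univ B) hB hBc hTB

lemma transPt_restrict_orbitClosure {S : Y → Y} {y : Y}
    (h : MapsTo S (orbitClosure S y) (orbitClosure S y)) :
    TransPt (h.restrict S _ _) ⟨y, mem_orbitClosure_self S y⟩ := by
  refine Subtype.dense_iff.2 (closure_mono ?_)
  rintro _ ⟨n, rfl⟩
  exact ⟨_, ⟨n, rfl⟩, h.coe_iterate_restrict _ n⟩

end Orbits

section Minimality

variable {Y : Type} [TopologicalSpace Y] {S : Y → Y} {Z : Set Y}

lemma IsMinimalSet.minimalSys_restrict (hZ : IsMinimalSet S Z) (h : MapsTo S Z Z) :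
    MinimalSys (h.restrict S Z Z) := by
  intro B hB hBc hSB
  have himage : Subtype.val '' B = Z := by
    refine hZ.2.2.2 _ (image_subset_range _ _ |>.trans Subtype.range_coe.subset)
      (hB.image _) (hZ.2.1.isClosedMap_subtype_val B hBc) ?_
    rintro _ ⟨b, hb, rfl⟩
    exact ⟨_, hSB hb, rfl⟩
  refine eq_univ_of_forall fun z => ?_
  obtain ⟨b, hb, hbz⟩ := himage.symm.subset z.2
  rwa [← Subtype.ext hbz]

lemma IsMinimalSet.surjOn [CompactSpace Y] [T2Space Y] (hS : Continuous S)
    (hZ : IsMinimalSet S Z) : SurjOn S Z Z := by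
  have hSZ : MapsTo S Z Z := hZ.2.2.1
  refine (hZ.2.2.2 _ hSZ.image_subset (hZ.1.image S)
    (hZ.2.1.isCompact.image hS).isClosed ?_).symm.subset
  rintro _ ⟨a, ha, rfl⟩
  exact mem_image_of_mem S (hSZ ha)

end Minimality

/- If `y ∉ A`, let `2ε = d(y, A)` and `a ∈ A`. A visit of the orbit of `y` near `a` is
followed by `N + 1` steps `ε`-shadowing the orbit of `a`, which stays in `A`; by syndeticity
one of them lies in `B(y, ε)`. -/
lemma mem_of_syndetic_of_subset_orbitClosure {Y : Type} [MetricSpace Y] {S : Y → Y}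
    (hS : Continuous S) {y : Y} (hy : FRecurrentPt {A | Syndetic A} S y) {A : Set Y}
    (hAy : A ⊆ orbitClosure S y) (hA : A.Nonempty) (hAc : IsClosed A) (hSA : MapsTo S A A) :
    y ∈ A := by
  by_contra hyA
  set ε := Metric.infDist y A / 2 with hε_def
  have hε : 0 < ε := half_pos ((hAc.notMem_iff_infDist_pos hA).mp hyA)
  obtain ⟨N, hN⟩ := hy _ (Metric.ball_mem_nhds y hε)
  obtain ⟨a, ha⟩ := hA
  set V := ⋂ i ∈ Finset.range (N + 1), S^[i] ⁻¹' Metric.ball (S^[i] a) ε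
  have hV : V ∈ 𝓝 a := (biInter_finset_mem _).2 fun i _ =>
    (hS.iterate i).continuousAt.preimage_mem_nhds (Metric.ball_mem_nhds _ hε)
  obtain ⟨_, hm, m, rfl⟩ := mem_closure_iff_nhds.mp (hAy ha) V hV
  obtain ⟨k, hk, hmk, hkN⟩ := hN m
  have hshadow : dist (S^[k] y) (S^[k - m] a) < ε := by
    have := mem_iInter₂.mp hm (k - m) (Finset.mem_range.2 (by omega))
    rwa [mem_preimage, ← iterate_add_apply, Nat.sub_add_cancel hmk] at this
  have hreturn : dist (S^[k] y) y < ε := hk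
  have hfar : 2 * ε ≤ dist y (S^[k - m] a) := by
    rw [hε_def]
    linarith [Metric.infDist_le_dist_of_mem (x := y) (hSA.iterate (k - m) ha)]
  linarith [dist_triangle_left y (S^[k - m] a) (S^[k] y)]

lemma isMinimalSet_orbitClosure_of_syndetic {Y : Type} [MetricSpace Y] {S : Y → Y}
    (hS : Continuous S) {y : Y} (hy : FRecurrentPt {A | Syndetic A} S y) :
    IsMinimalSet S (orbitClosure S y) :=
  ⟨⟨y, mem_orbitClosure_self S y⟩, isClosed_closure, mapsTo_orbitClosure hS y,
    fun _ hAy hA hAc hSA => hAy.antisymm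
      (orbitClosure_subset (mem_of_syndetic_of_subset_orbitClosure hS hy hAy hA hAc hSA)
        hAc hSA)⟩

section Disjointness

variable {X Y : Type} [TopologicalSpace X] [TopologicalSpace Y]

lemma DisjointSys.transPt_prodMap [CompactSpace X] [CompactSpace Y] [T2Space X] [T2Space Y]
    {T : X → X} {S : Y → Y} (h : DisjointSys T S) (hT : Continuous T) (hS : Continuous S)
    {x : X} {y : Y} (hx : TransPt T x) (hy : TransPt S y) :
    TransPt (Prod.map T S) (x, y) := by
  rw [transPt_iff_orbitClosure_eq_univ] at hx hy ⊢
  refine h _ ⟨⟨_, mem_orbitClosure_self _ _⟩, isClosed_closure,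
    mapsTo_orbitClosure (hT.prodMap hS) _, ?_, ?_⟩
  · rw [image_orbitClosure continuous_fst (fun _ => rfl), hx]
  · rw [image_orbitClosure continuous_snd (fun _ => rfl), hy]

lemma DisjointSys.eq_of_self [T2Space X] {T : X → X} (h : DisjointSys T T) (a b : X) :
    a = b := by
  have hdiag : diagonal X = univ := by
    refine h _ ⟨⟨(a, a), rfl⟩, isClosed_diagonal, fun p (hp : p.1 = p.2) => congrArg T hp,
      ?_, ?_⟩ <;>
    exact eq_univ_of_forall fun z => ⟨(z, z), rfl, rfl⟩
  exact hdiag.symm.subset (mem_univ (a, b))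

end Disjointness

theorem statement_7_general {X : Type} [MetricSpace X] [CompactSpace X] (T : X → X)
    (hTc : Continuous T) (hTs : Function.Surjective T)
    (hdisj : ∀ (Y : Type) [MetricSpace Y] [CompactSpace Y] (S : Y → Y),
      Continuous S → Function.Surjective S → MinimalSys S → DisjointSys T S)
    (x : X) (hx : TransPt T x) :
    FProductRecurrent {A : Set ℕ | Syndetic A} T x ∧
      ((∃ a b : X, a ≠ b) → ¬ IsMinimalPt T x) := by
  refine ⟨fun Y _ _ S hSc _ y hy => ?_, fun ⟨a, b, hab⟩ hmin => hab ?_⟩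
  · have hZ := isMinimalSet_orbitClosure_of_syndetic hSc hy
    have : CompactSpace (orbitClosure S y) := isCompact_iff_compactSpace.mp hZ.2.1.isCompact
    have hSZ : MapsTo S (orbitClosure S y) (orbitClosure S y) := hZ.2.2.1
    have hSZs : Surjective (hSZ.restrict S _ _) := hSZ.restrict_surjective_iff.2 (hZ.surjOn hSc)
    have hxy := (hdisj _ _ (hSc.restrict hSZ) hSZs (hZ.minimalSys_restrict hSZ)).transPt_prodMap
      hTc (hSc.restrict hSZ) hx (transPt_restrict_orbitClosure hSZ)
    exact (hxy.recurrentPt (hTc.prodMap (hSc.restrict hSZ)) (hTs.prodMap hSZs)).map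
      (continuous_id.prodMap continuous_subtype_val) (fun _ => rfl)
  · exact (hdisj X T hTc hTs (hx.minimalSys hmin)).eq_of_self a b

/-- if a transitive system is disjoint from every minimal system, then every
transitive point is `F_s`-product recurrent; moreover if `X` has more than one point then
every transitive point is non-minimal. -/
theorem statement_7 {X : Type} [MetricSpace X] [CompactSpace X] (T : X → X)
    (hTc : Continuous T) (hTs : Function.Surjective T) (htr : TransitiveSys T)
    (hdisj : ∀ (Y : Type) [MetricSpace Y] [CompactSpace Y] (S : Y → Y),
      Continuous S → Function.Surjective S → MinimalSys S → DisjointSys T S)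
    (x : X) (hx : TransPt T x) :
    FProductRecurrent {A : Set ℕ | Syndetic A} T x ∧
      ((∃ a b : X, a ≠ b) → ¬ IsMinimalPt T x) :=
  statement_7_general T hTc hTs hdisj x hx

end PaperFormal
end
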